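/- arXiv:1702.00179 — 3 statements merged into one kernel-verified Lean document; each statement's English description precedes it below -/
import Mathlib

section
/- Let m : [θ̲, ∞) → ℝ be continuous, nonnegative, increasing to +∞, with m(θ)/θ → 0 as θ → ∞, and suppose there exists θ_d > θ̲ such that θ ↦ m(θ)/θ is decreasing on [θ_d, ∞). Define Φ(θ) = ∫_{θ̲}^{θ} √(m(s)) ds. Then there exists a constant D_m > 0 such that for all sufficiently large θ, Φ(θ) ≤ θ√(m(θ)) ≤ D_m Φ(θ). -/
open Set Filter

/-- For a sublinear mortality trade-off `m`, with
`Φ θ = ∫_{θ̲}^θ √(m s) ds`, there is `D_m > 0` with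
`Φ θ ≤ θ √(m θ) ≤ D_m Φ θ` for all sufficiently large `θ`. -/
theorem phi_comparable_theta_sqrt_m
    (θl : ℝ) (hθl : 0 < θl) (m : ℝ → ℝ)
    (hcont : ContinuousOn m (Ici θl))
    (hnonneg : ∀ θ ∈ Ici θl, 0 ≤ m θ)
    (hmono : MonotoneOn m (Ici θl))
    (htop : Tendsto m atTop atTop)
    (hsub : Tendsto (fun θ => m θ / θ) atTop (nhds 0))
    (θd : ℝ) (hθd : θl < θd)
    (hdec : ∀ θ₁ ∈ Ici θd, ∀ θ₂ ∈ Ici θd, θ₁ ≤ θ₂ → m θ₂ / θ₂ ≤ m θ₁ / θ₁)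
    (Φ : ℝ → ℝ) (hΦ : ∀ θ, Φ θ = ∫ s in θl..θ, Real.sqrt (m s)) :
    ∃ D : ℝ, 0 < D ∧ ∀ᶠ θ in atTop,
      Φ θ ≤ θ * Real.sqrt (m θ) ∧ θ * Real.sqrt (m θ) ≤ D * Φ θ := by
  refine ⟨3, by norm_num, ?_⟩
  have hcont' : ContinuousOn (fun s => Real.sqrt (m s)) (Ici θl) :=
    Real.continuous_sqrt.comp_continuousOn hcont
  have hint : ∀ a b : ℝ, θl ≤ a → a ≤ b →
      IntervalIntegrable (fun s => Real.sqrt (m s)) MeasureTheory.volume a b := by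
    intro a b ha hab
    apply (hcont'.mono ?_).intervalIntegrable
    rw [uIcc_of_le hab]
    exact fun x hx => le_trans ha hx.1
  filter_upwards [eventually_ge_atTop (2 * θd)] with θ hθ
  have hθd0 : 0 < θd := hθl.trans hθd
  have hθ2d : θd ≤ θ / 2 := by linarith
  have hθl2 : θl ≤ θ / 2 := by linarith
  have hθl' : θl ≤ θ := by linarith
  have hθ0 : 0 < θ := by linarith
  have hmθ0 : 0 ≤ m θ := hnonneg θ hθl'
  constructor
  · -- upper bound
    rw [hΦ]
    calc ∫ s in θl..θ, Real.sqrt (m s)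
        ≤ ∫ _s in θl..θ, Real.sqrt (m θ) := by
          apply intervalIntegral.integral_mono_on hθl' (hint θl θ le_rfl hθl')
            intervalIntegrable_const
          intro s hs
          exact Real.sqrt_le_sqrt (hmono hs.1 hθl' hs.2)
      _ = (θ - θl) * Real.sqrt (m θ) := by simp [smul_eq_mul]
      _ ≤ θ * Real.sqrt (m θ) := by
          nlinarith [Real.sqrt_nonneg (m θ)]
  · -- lower bound
    have key : ∀ s ∈ Icc (θ / 2) θ, Real.sqrt (m θ / 2) ≤ Real.sqrt (m s) := by
      intro s hs
      have hsd : θd ≤ s := le_trans hθ2d hs.1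
      have hs0 : 0 < s := hθd0.trans_le hsd
      have hr : m θ / θ ≤ m s / s :=
        hdec s hsd θ (le_trans hsd hs.2) hs.2
      have hms : m θ / 2 ≤ m s := by
        have h1 : m θ * s ≤ m s * θ := (div_le_div_iff₀ hθ0 hs0).mp hr
        nlinarith [hs.1]
      exact Real.sqrt_le_sqrt hms
    have h2 : (θ - θ / 2) * Real.sqrt (m θ / 2) ≤ ∫ s in (θ / 2)..θ, Real.sqrt (m s) := by
      have := intervalIntegral.integral_mono_on (by linarith : θ / 2 ≤ θ)
        intervalIntegrable_const (hint (θ / 2) θ hθl2 (by linarith)) key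
      simpa [smul_eq_mul, mul_div_assoc] using this
    have h1 : 0 ≤ ∫ s in θl..θ/2, Real.sqrt (m s) := by
      apply intervalIntegral.integral_nonneg hθl2
      intro s _
      exact Real.sqrt_nonneg _
    have hsplit : Φ θ = (∫ s in θl..θ/2, Real.sqrt (m s)) + ∫ s in (θ / 2)..θ, Real.sqrt (m s) := by
      rw [hΦ, ← intervalIntegral.integral_add_adjacent_intervals
        (hint θl (θ / 2) le_rfl hθl2) (hint (θ / 2) θ hθl2 (by linarith))]
    have hΦge : (θ / 2) * Real.sqrt (m θ / 2) ≤ Φ θ := by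
      rw [hsplit]
      nlinarith [h1, h2]
    have hsqrt2 : Real.sqrt 2 ≤ 3 / 2 := by
      have h := Real.sqrt_le_sqrt (by norm_num : (2:ℝ) ≤ (3/2)^2)
      rwa [Real.sqrt_sq (by norm_num : (0:ℝ) ≤ 3/2)] at h
    have hrel : Real.sqrt (m θ) = Real.sqrt 2 * Real.sqrt (m θ / 2) := by
      rw [← Real.sqrt_mul (by norm_num : (0:ℝ) ≤ 2)]
      congr 1
      ring
    rw [hrel]
    nlinarith [Real.sqrt_nonneg (m θ / 2), Real.sqrt_nonneg 2, hΦge, hsqrt2, hθ0.le,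
      mul_nonneg hθ0.le (Real.sqrt_nonneg (m θ / 2))]
end

section
/- Suppose m satisfies Hypothesis 1.1 with m(θ)/θ → 0, and let Φ(θ) = ∫_{θ̲}^θ √(m(s)) ds and η_a(t) be defined by Φ(η_a(t)) = at. Then for each a > 0 there exists C_a ≥ 1 such that for all sufficiently large t, C_a^{-1} η_1(t) ≤ η_a(t) ≤ C_a η_1(t). -/
open Set Filter

/-- The spreading rates `η_a` and `η_1` are comparable: there is
`C_a ≥ 1` with `C_a⁻¹ η_1(t) ≤ η_a(t) ≤ C_a η_1(t)` for large `t`. -/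
theorem eta_a_comparable_eta_one
    (θl : ℝ) (hθl : 0 < θl) (m : ℝ → ℝ)
    (hcont : ContinuousOn m (Ici θl))
    (hnonneg : ∀ θ ∈ Ici θl, 0 ≤ m θ)
    (hmono : MonotoneOn m (Ici θl))
    (htop : Tendsto m atTop atTop)
    (hsub : Tendsto (fun θ => m θ / θ) atTop (nhds 0))
    (θd : ℝ) (hθd : θl < θd)
    (hdec : ∀ θ₁ ∈ Ici θd, ∀ θ₂ ∈ Ici θd, θ₁ ≤ θ₂ → m θ₂ / θ₂ ≤ m θ₁ / θ₁)
    (Φ : ℝ → ℝ) (hΦ : ∀ θ, Φ θ = ∫ s in θl..θ, Real.sqrt (m s))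
    (a : ℝ) (ha : 0 < a) (ηa η₁ : ℝ → ℝ)
    (hηa : ∀ᶠ t in atTop, ηa t ∈ Ici θl ∧ Φ (ηa t) = a * t)
    (hη₁ : ∀ᶠ t in atTop, η₁ t ∈ Ici θl ∧ Φ (η₁ t) = 1 * t) :
    ∃ C : ℝ, 1 ≤ C ∧ ∀ᶠ t in atTop, C⁻¹ * η₁ t ≤ ηa t ∧ ηa t ≤ C * η₁ t := by
  have hsm : ContinuousOn (fun s => Real.sqrt (m s)) (Ici θl) :=
    Real.continuous_sqrt.comp_continuousOn hcont
  have hInt : ∀ x ∈ Ici θl, ∀ y ∈ Ici θl, x ≤ y →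
      IntervalIntegrable (fun s => Real.sqrt (m s)) MeasureTheory.volume x y := by
    intro x hx y hy hxy
    apply ContinuousOn.intervalIntegrable
    apply hsm.mono
    rw [uIcc_of_le hxy]
    exact fun s hs => le_trans hx hs.1
  -- Φ is monotone on Ici θl
  have hΦmono : ∀ x ∈ Ici θl, ∀ y ∈ Ici θl, x ≤ y → Φ x ≤ Φ y := by
    intro x hx y hy hxy
    rw [hΦ, hΦ]
    have h1 := intervalIntegral.integral_add_adjacent_intervals
      (hInt θl self_mem_Ici x hx hx) (hInt x hx y hy hxy)
    have h2 : 0 ≤ ∫ s in x..y, Real.sqrt (m s) :=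
      intervalIntegral.integral_nonneg hxy (fun u _ => Real.sqrt_nonneg _)
    linarith
  -- strict comparison
  have hΦstrict : ∀ x ∈ Ici θl, ∀ y ∈ Ici θl, Φ x < Φ y → x < y := by
    intro x hx y hy hxy
    by_contra h
    push_neg at h
    exact absurd (hΦmono y hy x hx h) (not_le.mpr hxy)
  -- Lemma A : Φ (c*θ) ≥ (c-1)*θ*√(m θ)
  have lemA : ∀ θ ∈ Ici θl, ∀ c : ℝ, 1 ≤ c →
      (c - 1) * θ * Real.sqrt (m θ) ≤ Φ (c * θ) := by
    intro θ hθ c hc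
    have hθ0 : 0 < θ := lt_of_lt_of_le hθl hθ
    have hle : θ ≤ c * θ := le_mul_of_one_le_left hθ0.le hc
    have hcθ : c * θ ∈ Ici θl := le_trans hθ hle
    rw [hΦ]
    have hsplit := intervalIntegral.integral_add_adjacent_intervals
      (hInt θl self_mem_Ici θ hθ hθ) (hInt θ hθ (c * θ) hcθ hle)
    have h1 : 0 ≤ ∫ s in θl..θ, Real.sqrt (m s) :=
      intervalIntegral.integral_nonneg hθ (fun u _ => Real.sqrt_nonneg _)
    have h2 : (∫ s in θ..(c*θ), (Real.sqrt (m θ) : ℝ)) ≤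
        ∫ s in θ..(c*θ), Real.sqrt (m s) := by
      apply intervalIntegral.integral_mono_on hle
        (intervalIntegrable_const) (hInt θ hθ (c * θ) hcθ hle)
      intro s hs
      exact Real.sqrt_le_sqrt (hmono hθ (le_trans hθ hs.1) hs.1)
    rw [intervalIntegral.integral_const] at h2
    have : (c * θ - θ) • Real.sqrt (m θ) = (c - 1) * θ * Real.sqrt (m θ) := by
      rw [smul_eq_mul]; ring
    rw [this] at h2
    linarith
  -- Lemma B : Φ θ ≤ θ * √(m θ)
  have lemB : ∀ θ ∈ Ici θl, Φ θ ≤ θ * Real.sqrt (m θ) := by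
    intro θ hθ
    rw [hΦ]
    have h2 : (∫ s in θl..θ, Real.sqrt (m s)) ≤
        ∫ s in θl..θ, (Real.sqrt (m θ) : ℝ) := by
      apply intervalIntegral.integral_mono_on hθ
        (hInt θl self_mem_Ici θ hθ hθ) (intervalIntegrable_const)
      intro s hs
      exact Real.sqrt_le_sqrt (hmono hs.1 hθ hs.2)
    rw [intervalIntegral.integral_const] at h2
    have hs0 : 0 ≤ Real.sqrt (m θ) := Real.sqrt_nonneg _
    have : (θ - θl) • Real.sqrt (m θ) ≤ θ * Real.sqrt (m θ) := by
      rw [smul_eq_mul]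
      nlinarith [mul_nonneg hθl.le hs0]
    linarith
  -- Lemma C : for θ ≥ 2 θd, θ * √(m θ) ≤ 2√2 * Φ θ
  have lemC : ∀ θ : ℝ, 2 * θd ≤ θ → θ * Real.sqrt (m θ) ≤ 2 * Real.sqrt 2 * Φ θ := by
    intro θ hθ2
    have hθd0 : 0 < θd := lt_trans hθl hθd
    have hhalf : θd ≤ θ / 2 := by linarith
    have hhalfθl : θl ≤ θ / 2 := by linarith
    have hθθl : θl ≤ θ := by linarith
    have hθ0 : 0 < θ := lt_of_lt_of_le hθl hθθl
    have hmθ : 0 ≤ m θ := hnonneg θ hθθl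
    -- pointwise bound on [θ/2, θ]
    have hpt : ∀ s ∈ Icc (θ/2) θ, Real.sqrt (m θ / 2) ≤ Real.sqrt (m s) := by
      intro s hs
      apply Real.sqrt_le_sqrt
      have hs0 : 0 < s := lt_of_lt_of_le (by linarith : (0:ℝ) < θ/2) hs.1
      have hd := hdec s (mem_Ici.mpr (le_trans hhalf hs.1)) θ (mem_Ici.mpr (by linarith)) hs.2
      have h1 : m θ / θ * s ≤ m s := by
        have := (le_div_iff₀ hs0).mp hd
        linarith
      have h2 : m θ / 2 ≤ m θ / θ * s := by
        have : m θ / θ * (θ / 2) ≤ m θ / θ * s := by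
          apply mul_le_mul_of_nonneg_left hs.1 (div_nonneg hmθ hθ0.le)
        have heq : m θ / θ * (θ / 2) = m θ / 2 := by
          field_simp
        linarith
      linarith
    have hle : θ / 2 ≤ θ := by linarith
    have hint2 : (∫ s in (θ/2)..θ, (Real.sqrt (m θ / 2) : ℝ)) ≤
        ∫ s in (θ/2)..θ, Real.sqrt (m s) := by
      apply intervalIntegral.integral_mono_on hle
        (intervalIntegrable_const) (hInt (θ/2) hhalfθl θ hθθl hle)
      exact hpt
    rw [intervalIntegral.integral_const] at hint2
    have hsplit := intervalIntegral.integral_add_adjacent_intervals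
      (hInt θl self_mem_Ici (θ/2) hhalfθl hhalfθl) (hInt (θ/2) hhalfθl θ hθθl hle)
    have h1 : 0 ≤ ∫ s in θl..(θ/2), Real.sqrt (m s) :=
      intervalIntegral.integral_nonneg hhalfθl (fun u _ => Real.sqrt_nonneg _)
    have hΦlb : (θ - θ/2) * Real.sqrt (m θ / 2) ≤ Φ θ := by
      rw [hΦ]
      rw [smul_eq_mul] at hint2
      linarith
    have hmul : Real.sqrt (m θ) = Real.sqrt 2 * Real.sqrt (m θ / 2) := by
      rw [← Real.sqrt_mul (by norm_num : (0:ℝ) ≤ 2)]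
      congr 1
      ring
    have hmm := mul_le_mul_of_nonneg_left hΦlb
      (by positivity : (0:ℝ) ≤ 2 * Real.sqrt 2)
    have hkey : θ * Real.sqrt (m θ) =
        2 * Real.sqrt 2 * ((θ - θ/2) * Real.sqrt (m θ / 2)) := by
      rw [hmul]; ring
    linarith
  -- choose the constant C
  have hDpos0 : (0:ℝ) < 2 * Real.sqrt 2 := by positivity
  obtain ⟨D, hD⟩ : ∃ x : ℝ, x = 2 * Real.sqrt 2 := ⟨_, rfl⟩
  have hDpos : 0 < D := hD ▸ hDpos0
  have lemC' : ∀ θ : ℝ, 2 * θd ≤ θ → θ * Real.sqrt (m θ) ≤ D * Φ θ := by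
    intro θ hθ; rw [hD]; exact lemC θ hθ
  obtain ⟨C, hCdef⟩ : ∃ x : ℝ, x = a + 2 + D / a := ⟨_, rfl⟩
  have hDa : 0 < D / a := div_pos hDpos ha
  have hC1 : 1 ≤ C := by linarith
  have hCpos : 0 < C := lt_of_lt_of_le one_pos hC1
  refine ⟨C, hC1, ?_⟩
  filter_upwards [hηa, hη₁, eventually_gt_atTop 0, eventually_gt_atTop (Φ (2 * θd))]
    with t hat h1t ht0 htΦ
  obtain ⟨haθl, haΦ⟩ := hat
  obtain ⟨h1θl, h1Φ⟩ := h1t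
  rw [one_mul] at h1Φ
  have h2θd : θl ≤ 2 * θd := by linarith
  have hη1big : 2 * θd ≤ η₁ t := by
    by_contra h
    push_neg at h
    have := hΦmono (η₁ t) h1θl (2 * θd) h2θd h.le
    rw [h1Φ] at this
    linarith
  have hη10 : 0 < η₁ t := lt_of_lt_of_le hθl h1θl
  constructor
  · -- lower bound: C⁻¹ * η₁ t ≤ ηa t
    by_cases hx : C⁻¹ * η₁ t ≤ θl
    · exact le_trans hx haθl
    · push_neg at hx
      have hxθl : θl ≤ C⁻¹ * η₁ t := hx.le
      have hx0 : (0:ℝ) < C⁻¹ * η₁ t := lt_trans hθl hx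
      have hCinv1 : C⁻¹ ≤ 1 := by
        rw [← inv_one]
        exact inv_anti₀ one_pos hC1
      have hxle : C⁻¹ * η₁ t ≤ η₁ t := by nlinarith
      have hB := lemB (C⁻¹ * η₁ t) hxθl
      have hmx : Real.sqrt (m (C⁻¹ * η₁ t)) ≤ Real.sqrt (m (η₁ t)) :=
        Real.sqrt_le_sqrt (hmono hxθl h1θl hxle)
      have hC' := lemC' (η₁ t) hη1big
      have hΦx : Φ (C⁻¹ * η₁ t) ≤ C⁻¹ * (D * t) := by
        calc Φ (C⁻¹ * η₁ t) ≤ (C⁻¹ * η₁ t) * Real.sqrt (m (C⁻¹ * η₁ t)) := hB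
          _ ≤ (C⁻¹ * η₁ t) * Real.sqrt (m (η₁ t)) :=
              mul_le_mul_of_nonneg_left hmx hx0.le
          _ = C⁻¹ * (η₁ t * Real.sqrt (m (η₁ t))) := by ring
          _ ≤ C⁻¹ * (D * Φ (η₁ t)) :=
              mul_le_mul_of_nonneg_left hC' (inv_nonneg.mpr hCpos.le)
          _ = C⁻¹ * (D * t) := by rw [h1Φ]
      have haC : a * C = a * a + 2 * a + D := by
        rw [hCdef]
        field_simp
      have hDlt : D < a * C := by nlinarith [mul_pos ha ha]
      have hfrac : D / C < a := (div_lt_iff₀ hCpos).mpr hDlt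
      have hlt : C⁻¹ * (D * t) < a * t := by
        have h1 : C⁻¹ * (D * t) = (D / C) * t := by
          rw [div_eq_mul_inv]; ring
        rw [h1]
        exact mul_lt_mul_of_pos_right hfrac ht0
      have hΦlt : Φ (C⁻¹ * η₁ t) < Φ (ηa t) := by rw [haΦ]; linarith
      exact (hΦstrict (C⁻¹ * η₁ t) hxθl (ηa t) haθl hΦlt).le
  · -- upper bound: ηa t ≤ C * η₁ t
    have hA := lemA (η₁ t) h1θl C hC1
    have hB := lemB (η₁ t) h1θl
    rw [h1Φ] at hB
    have hCm1 : a + 1 ≤ C - 1 := by linarith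
    have h1 : (a + 1) * t ≤ (C - 1) * (η₁ t * Real.sqrt (m (η₁ t))) :=
      mul_le_mul hCm1 hB ht0.le (by linarith : (0:ℝ) ≤ C - 1)
    have hkey : a * t < Φ (C * η₁ t) := by nlinarith [hA]
    have hCη : C * η₁ t ∈ Ici θl := by
      have : η₁ t ≤ C * η₁ t := le_mul_of_one_le_left hη10.le hC1
      exact le_trans h1θl this
    have hΦlt : Φ (ηa t) < Φ (C * η₁ t) := by rw [haΦ]; exact hkey
    exact (hΦstrict (ηa t) haθl (C * η₁ t) hCη hΦlt).le
end

section
/- Let m satisfy Hypothesis 1.1 with m(θ)/θ → 0, let ā = m(θ₁+1) + γ_∞ + 1 for θ₁ large enough that (γ_∞+1)/(2m(θ₁)) ≤ 1, and let t be large. Fix x ∈ ℝ, θ ∈ (θ₁+1, η_{γ_∞+1}(t)] and (x', θ') ∈ (x−t, x+t) × (θ₁, θ₁+1). Then the action ζ(t, x, θ, x', θ') (infimum of ∫₀ᵗ [Ż₁²/(4Z₂) + Ż₂²/4 + m(Z₂)] ds over paths from (x,θ) to (x',θ') in time t) satisfies ζ(t,x,θ,x',θ') ≤ (x'−x)²/(4θ̲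 t) + Φ(η_{γ_∞+1}(t)) + m(θ₁+1) t ≤ ā t + t/(4θ̲). -/
open Set Filter

/-- The action `∫₀ᵗ (|Ż₁|²/(4Z₂) + |Ż₂|²/4 + m(Z₂)) ds` of a path. -/
noncomputable def toadAction (m : ℝ → ℝ) (t : ℝ) (Z₁ Z₂ : ℝ → ℝ) : ℝ :=
  ∫ s in (0:ℝ)..t,
    ((deriv Z₁ s) ^ 2 / (4 * Z₂ s) + (deriv Z₂ s) ^ 2 / 4 + m (Z₂ s))

/-- The minimal action `ζ(t,x,θ,y,η)` over Lipschitz paths in `ℝ × [θ̲,∞)`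
from `(y,η)` at time `0` to `(x,θ)` at time `t`. -/
noncomputable def toadZeta (θl : ℝ) (m : ℝ → ℝ) (t x θ y η : ℝ) : ℝ :=
  sInf { A : ℝ | ∃ Z₁ Z₂ : ℝ → ℝ,
    (∃ K, LipschitzOnWith K Z₁ (Icc 0 t)) ∧
    (∃ K, LipschitzOnWith K Z₂ (Icc 0 t)) ∧
    (∀ s ∈ Icc (0:ℝ) t, θl ≤ Z₂ s) ∧
    Z₁ 0 = y ∧ Z₂ 0 = η ∧ Z₁ t = x ∧ Z₂ t = θ ∧
    A = toadAction m t Z₁ Z₂ }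

set_option maxHeartbeats 2000000 in
/-- Lemma A.1: an explicit test trajectory shows that for
`θ ∈ (θ₁+1, η_{γ_∞+1}(t)]`, `(x',θ') ∈ (x−t,x+t) × (θ₁,θ₁+1)` and `t` large,
`ζ(t,x,θ,x',θ') ≤ (x'−x)²/(4θ̲t) + Φ(η_{γ_∞+1}(t)) + m(θ₁+1)t ≤ āt + t/(4θ̲)`
where `ā = m(θ₁+1) + γ_∞ + 1`. -/
theorem action_upper_bound_sublevel
    (θl : ℝ) (hθl : 0 < θl) (m : ℝ → ℝ)
    (hcont : Continuous m) (hnonneg : ∀ θ ∈ Ici θl, 0 ≤ m θ)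
    (hmono : MonotoneOn m (Ici θl))
    (htop : Tendsto m atTop atTop)
    (hsub : Tendsto (fun θ => m θ / θ) atTop (nhds 0))
    (Φ : ℝ → ℝ) (hΦ : ∀ θ, Φ θ = ∫ s in θl..θ, Real.sqrt (m s))
    (γinf : ℝ) (hγinf : 0 < γinf + 1)
    (η : ℝ → ℝ)
    (hη : ∀ᶠ t in atTop, η t ∈ Ici θl ∧ Φ (η t) = (γinf + 1) * t)
    (θ₁ : ℝ) (hθ₁ : θl < θ₁) (hθ₁pos : 0 < m θ₁)
    (hθ₁large : γinf + 1 ≤ 2 * m θ₁)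
    (abar : ℝ) (habar : abar = m (θ₁ + 1) + γinf + 1) :
    ∀ᶠ t in atTop, ∀ x x' θ θ' : ℝ,
      θ ∈ Ioc (θ₁ + 1) (η t) → x' ∈ Ioo (x - t) (x + t) →
      θ' ∈ Ioo θ₁ (θ₁ + 1) →
        toadZeta θl m t x' θ' x θ ≤
          (x' - x) ^ 2 / (4 * θl * t) + Φ (η t) + m (θ₁ + 1) * t ∧
        (x' - x) ^ 2 / (4 * θl * t) + Φ (η t) + m (θ₁ + 1) * t ≤
          abar * t + t / (4 * θl) := by
  have hsqm : Continuous fun u => Real.sqrt (m u) := hcont.sqrt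
  have hsqint : ∀ a b : ℝ, IntervalIntegrable (fun u => Real.sqrt (m u)) MeasureTheory.volume a b :=
    fun a b => hsqm.intervalIntegrable a b
  filter_upwards [hη, eventually_gt_atTop (0:ℝ)] with t htη ht0
  obtain ⟨hηl, hηΦ⟩ := htη
  intro x x' θ θ' hθ hx' hθ'
  obtain ⟨hθa, hθb⟩ := hθ
  obtain ⟨hx'a, hx'b⟩ := hx'
  obtain ⟨hθ'a, hθ'b⟩ := hθ'
  have hθ'θ : θ' < θ := hθ'b.trans hθa
  have hθlθ' : θl < θ' := hθ₁.trans hθ'a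
  have hθ'pos : 0 < θ' := hθl.trans hθlθ'
  have hθ₁η : θ₁ < η t := hθ'a.trans (hθ'θ.trans_le hθb)
  have hmm : ∀ ⦃u v : ℝ⦄, θl ≤ u → u ≤ v → m u ≤ m v :=
    fun u v hu huv => hmono hu (hu.trans huv) huv
  have hmθ₁ : ∀ u, θ₁ ≤ u → m θ₁ ≤ m u := fun u hu => hmm hθ₁.le hu
  have hmpos : ∀ u, θ₁ ≤ u → 0 < m u := fun u hu => hθ₁pos.trans_le (hmθ₁ u hu)
  -- the time-reparametrisation function G and its inverse F
  set g₀ : ℝ → ℝ := fun u => (2 * Real.sqrt (m u))⁻¹ with hg₀def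
  have hg₀pos : ∀ u, θ₁ < u → 0 < g₀ u := by
    intro u hu
    have h1 := hmpos u hu.le
    have h2 : 0 < Real.sqrt (m u) := Real.sqrt_pos.2 h1
    rw [hg₀def]
    positivity
  have hg₀cont : ContinuousOn g₀ (Ioi θ₁) := by
    apply ContinuousOn.inv₀
    · exact (continuous_const.mul hsqm).continuousOn
    · intro u hu
      have h1 := hmpos u (le_of_lt hu)
      have h2 : 0 < Real.sqrt (m u) := Real.sqrt_pos.2 h1
      positivity
  have hsubIoi : ∀ ⦃a b : ℝ⦄, θ₁ < a → θ₁ < b → uIcc a b ⊆ Ioi θ₁ := by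
    intro a b ha hb z hz
    exact lt_of_lt_of_le (lt_min ha hb) hz.1
  have hg₀int : ∀ ⦃a b : ℝ⦄, θ₁ < a → θ₁ < b →
      IntervalIntegrable g₀ MeasureTheory.volume a b :=
    fun a b ha hb => (hg₀cont.mono (hsubIoi ha hb)).intervalIntegrable
  set G : ℝ → ℝ := fun u => ∫ s in θ'..u, g₀ s with hGdef
  have hGstrictD : ∀ u, θ₁ < u → HasStrictDerivAt G (g₀ u) u := by
    intro u hu
    exact intervalIntegral.integral_hasStrictDerivAt_right (hg₀int hθ'a hu)
      (ContinuousOn.stronglyMeasurableAtFilter isOpen_Ioi hg₀cont u hu)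
      (hg₀cont.continuousAt (isOpen_Ioi.mem_nhds hu))
  have hGcont : ContinuousOn G (Ioi θ₁) :=
    fun u hu => ((hGstrictD u hu).hasDerivAt.continuousAt).continuousWithinAt
  have hGmono : StrictMonoOn G (Ioi θ₁) := by
    intro u hu v hv huv
    have hsplit := intervalIntegral.integral_add_adjacent_intervals
      (hg₀int hθ'a hu) (hg₀int hu hv)
    have hpos : 0 < ∫ s in u..v, g₀ s := by
      apply intervalIntegral.intervalIntegral_pos_of_pos_on (hg₀int hu hv)
      · intro z hz
        exact hg₀pos z (lt_trans hu hz.1)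
      · exact huv
    show G u < G v
    rw [hGdef]
    calc (∫ s in θ'..u, g₀ s) < (∫ s in θ'..u, g₀ s) + ∫ s in u..v, g₀ s := by linarith
    _ = ∫ s in θ'..v, g₀ s := hsplit
  set F : ℝ → ℝ := Function.invFunOn G (Ioi θ₁) with hFdef
  have hFG : ∀ u, θ₁ < u → F (G u) = u := fun u hu =>
    hGmono.injOn.leftInvOn_invFunOn hu
  have hFderiv : ∀ u, θ₁ < u → HasStrictDerivAt F (2 * Real.sqrt (m u)) (G u) := by
    intro u hu
    have hne : g₀ u ≠ 0 := (hg₀pos u hu).ne'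
    have hev : ∀ᶠ y in nhds u, F (G y) = y :=
      (isOpen_Ioi.eventually_mem hu).mono fun y hy => hFG y hy
    have h := (hGstrictD u hu).to_local_left_inverse hne hev
    rwa [hg₀def, inv_inv] at h
  set T : ℝ := G θ with hTdef
  have hθ₁θ : θ₁ < θ := lt_trans hθ'a hθ'θ
  have hGθ' : G θ' = 0 := intervalIntegral.integral_same
  have hF0 : F 0 = θ' := by rw [← hGθ']; exact hFG θ' hθ'a
  have hFT : F T = θ := hFG θ hθ₁θ
  have hT0 : 0 ≤ T := by
    rw [hTdef, ← hGθ']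
    exact (hGmono.monotoneOn) hθ'a hθ₁θ hθ'θ.le
  have hsθ₁ : 0 < Real.sqrt (m θ₁) := Real.sqrt_pos.2 hθ₁pos
  have hTle1 : T ≤ (θ - θ') * (2 * Real.sqrt (m θ₁))⁻¹ := by
    have hb : IntervalIntegrable (fun _ : ℝ => (2 * Real.sqrt (m θ₁))⁻¹)
        MeasureTheory.volume θ' θ := intervalIntegrable_const
    have h := intervalIntegral.integral_mono_on hθ'θ.le (hg₀int hθ'a hθ₁θ) hb
      (fun z hz => by
        have hz1 : θ₁ ≤ z := le_trans hθ'a.le hz.1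
        have h1 : Real.sqrt (m θ₁) ≤ Real.sqrt (m z) :=
          Real.sqrt_le_sqrt (hmθ₁ z hz1)
        have h2 : 0 < 2 * Real.sqrt (m θ₁) := by positivity
        show g₀ z ≤ (2 * Real.sqrt (m θ₁))⁻¹
        rw [hg₀def]
        exact inv_anti₀ h2 (by linarith))
    rw [intervalIntegral.integral_const, smul_eq_mul] at h
    exact h
  have hΦθ₁η : Real.sqrt (m θ₁) * (η t - θ₁) ≤ Φ (η t) := by
    have hsplit := intervalIntegral.integral_add_adjacent_intervals
      (hsqint θl θ₁) (hsqint θ₁ (η t))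
    have h1 : 0 ≤ ∫ s in θl..θ₁, Real.sqrt (m s) :=
      intervalIntegral.integral_nonneg hθ₁.le (fun u _ => Real.sqrt_nonneg _)
    have h2 : (η t - θ₁) * Real.sqrt (m θ₁) ≤ ∫ s in θ₁..(η t), Real.sqrt (m s) := by
      have hb : IntervalIntegrable (fun _ : ℝ => Real.sqrt (m θ₁))
          MeasureTheory.volume θ₁ (η t) := intervalIntegrable_const
      have h := intervalIntegral.integral_mono_on hθ₁η.le hb (hsqint θ₁ (η t))
        (fun z hz => Real.sqrt_le_sqrt (hmθ₁ z hz.1))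
      rw [intervalIntegral.integral_const, smul_eq_mul] at h
      exact h
    rw [hΦ (η t), ← hsplit]
    nlinarith
  have hTt : T ≤ t := by
    have h2s : 0 < 2 * Real.sqrt (m θ₁) := by positivity
    have h1 : T * (2 * Real.sqrt (m θ₁)) ≤ θ - θ' := by
      rw [← div_eq_mul_inv] at hTle1
      exact (le_div_iff₀ h2s).1 hTle1
    have h2 : θ - θ' ≤ η t - θ₁ := by linarith
    have h3 : Real.sqrt (m θ₁) * (η t - θ₁) ≤ (γinf + 1) * t := by
      rw [← hηΦ]; exact hΦθ₁η
    have hs2 : Real.sqrt (m θ₁) ^ 2 = m θ₁ := Real.sq_sqrt hθ₁pos.le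
    nlinarith [sq_nonneg (Real.sqrt (m θ₁)), hsθ₁, ht0]
  have hFmem : ∀ a ∈ Icc (0:ℝ) T, F a ∈ Icc θ' θ ∧ HasDerivAt F (2 * Real.sqrt (m (F a))) a := by
    intro a ha
    have hGcont' : ContinuousOn G (Icc θ' θ) :=
      hGcont.mono (fun z hz => lt_of_lt_of_le hθ'a hz.1)
    have hiv : a ∈ Icc (G θ') (G θ) := by rw [hGθ']; exact ha
    obtain ⟨u, hu, hGu⟩ := intermediate_value_Icc hθ'θ.le hGcont' hiv
    have hu₁ : θ₁ < u := lt_of_lt_of_le hθ'a hu.1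
    have hFa : F a = u := by rw [← hGu]; exact hFG u hu₁
    refine ⟨by rw [hFa]; exact hu, ?_⟩
    rw [hFa, ← hGu]
    exact (hFderiv u hu₁).hasDerivAt
  -- the test path
  set c : ℝ := (x' - x) / t with hcdef
  set Z₁ : ℝ → ℝ := fun s => x + c * s with hZ₁def
  set f : ℝ → ℝ := fun s => F (T - s) with hfdef
  set Z₂ : ℝ → ℝ := fun s => F (max (T - s) 0) with hZ₂def
  have hZ₁deriv : ∀ s, HasDerivAt Z₁ c s := by
    intro s
    rw [hZ₁def]
    simpa using ((hasDerivAt_id s).const_mul c).const_add x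
  have hZ₁d : ∀ s, deriv Z₁ s = c := fun s => (hZ₁deriv s).deriv
  have hZ₁0 : Z₁ 0 = x := by rw [hZ₁def]; simp
  have hZ₁t : Z₁ t = x' := by rw [hZ₁def]; show x + c * t = x'; rw [hcdef]; field_simp; ring
  have hfmem : ∀ s ∈ Icc (0:ℝ) T, f s ∈ Icc θ' θ := by
    intro s hs
    exact (hFmem (T - s) ⟨by linarith [hs.2], by linarith [hs.1]⟩).1
  have hfderiv : ∀ s ∈ Icc (0:ℝ) T, HasDerivAt f (-(2 * Real.sqrt (m (f s)))) s := by
    intro s hs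
    have h1 : HasDerivAt (fun y : ℝ => T - y) (-1) s := (hasDerivAt_id s).const_sub T
    have h2 := (hFmem (T - s) ⟨by linarith [hs.2], by linarith [hs.1]⟩).2
    have h3 := HasDerivAt.comp s h2 h1
    rw [hfdef]
    have h4 : 2 * Real.sqrt (m (F (T - s))) * -1 = -(2 * Real.sqrt (m (F (T - s)))) := by ring
    rw [h4] at h3
    exact h3
  have hfcont : ContinuousOn f (Icc (0:ℝ) T) :=
    fun s hs => ((hfderiv s hs).continuousAt).continuousWithinAt
  have hZ₂eqf : ∀ s, s ≤ T → Z₂ s = f s := by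
    intro s hs
    rw [hZ₂def, hfdef]
    show F (max (T - s) 0) = F (T - s)
    rw [max_eq_left (by linarith : (0:ℝ) ≤ T - s)]
  have hZ₂const : ∀ s, T ≤ s → Z₂ s = θ' := by
    intro s hs
    rw [hZ₂def]
    show F (max (T - s) 0) = θ'
    rw [max_eq_right (by linarith : T - s ≤ 0)]
    exact hF0
  have hZ₂0 : Z₂ 0 = θ := by rw [hZ₂eqf 0 hT0, hfdef]; show F (T - 0) = θ; rw [sub_zero]; exact hFT
  have hZ₂t : Z₂ t = θ' := hZ₂const t hTt
  have hZ₂mem : ∀ s ∈ Icc (0:ℝ) t, Z₂ s ∈ Icc θ' θ := by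
    intro s hs
    rcases le_total s T with h | h
    · rw [hZ₂eqf s h]; exact hfmem s ⟨hs.1, h⟩
    · rw [hZ₂const s h]; exact ⟨le_refl θ', hθ'θ.le⟩
  have hZ₂derivlt : ∀ s, 0 < s → s < T →
      HasDerivAt Z₂ (-(2 * Real.sqrt (m (f s)))) s ∧ Z₂ s = f s := by
    intro s hs0 hsT
    have hev : Z₂ =ᶠ[nhds s] f := by
      filter_upwards [Iio_mem_nhds hsT] with y hy
      exact hZ₂eqf y (le_of_lt hy)
    exact ⟨(hfderiv s ⟨hs0.le, hsT.le⟩).congr_of_eventuallyEq hev, hZ₂eqf s hsT.le⟩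
  have hZ₂derivgt : ∀ s, T < s → deriv Z₂ s = 0 ∧ Z₂ s = θ' := by
    intro s hsT
    have hev : Z₂ =ᶠ[nhds s] (fun _ => θ') := by
      filter_upwards [Ioi_mem_nhds hsT] with y hy
      exact hZ₂const y (le_of_lt hy)
    refine ⟨?_, hZ₂const s hsT.le⟩
    rw [hev.deriv_eq]
    exact deriv_const s θ'
  -- Lipschitz properties
  have hlipZ₁ : ∃ K, LipschitzOnWith K Z₁ (Icc 0 t) := by
    refine ⟨‖c‖₊, LipschitzWith.lipschitzOnWith ?_⟩
    apply LipschitzWith.of_dist_le_mul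
    intro a b
    rw [hZ₁def]
    show dist (x + c * a) (x + c * b) ≤ ‖c‖₊ * dist a b
    have h1 : x + c * a - (x + c * b) = c * (a - b) := by ring
    rw [Real.dist_eq, Real.dist_eq, h1, abs_mul, coe_nnnorm, Real.norm_eq_abs]
  have hlipZ₂ : ∃ K, LipschitzOnWith K Z₂ (Icc 0 t) := by
    have hsq : (0:ℝ) ≤ 2 * Real.sqrt (m θ) := by positivity
    have hFlip : LipschitzOnWith ‖2 * Real.sqrt (m θ)‖₊ F (Icc 0 T) := by
      apply Convex.lipschitzOnWith_of_nnnorm_hasDerivWithin_le (convex_Icc 0 T)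
        (f' := fun a => 2 * Real.sqrt (m (F a)))
      · intro a ha
        exact ((hFmem a ha).2).hasDerivWithinAt
      · intro a ha
        have hmem := (hFmem a ha).1
        have h1 : m (F a) ≤ m θ := hmm (le_trans hθlθ'.le hmem.1) hmem.2
        have h2 : Real.sqrt (m (F a)) ≤ Real.sqrt (m θ) := Real.sqrt_le_sqrt h1
        rw [← NNReal.coe_le_coe, coe_nnnorm, coe_nnnorm, Real.norm_eq_abs, Real.norm_eq_abs,
          abs_of_nonneg (by positivity), abs_of_nonneg hsq]
        linarith
    have hclamp : LipschitzWith 1 (fun s : ℝ => max (T - s) 0) := by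
      apply LipschitzWith.of_dist_le_mul
      intro a b
      rw [Real.dist_eq, Real.dist_eq]
      simp only [NNReal.coe_one, one_mul]
      calc |max (T - a) 0 - max (T - b) 0| ≤ |(T - a) - (T - b)| :=
            abs_max_sub_max_le_abs _ _ _
      _ = |a - b| := by rw [show (T - a) - (T - b) = -(a - b) by ring, abs_neg]
    have hmaps : MapsTo (fun s : ℝ => max (T - s) 0) (Icc 0 t) (Icc 0 T) := by
      intro s hs
      exact ⟨le_max_right _ _, max_le (by linarith [hs.1]) hT0⟩
    refine ⟨‖2 * Real.sqrt (m θ)‖₊ * 1, ?_⟩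
    have := hFlip.comp (hclamp.lipschitzOnWith (s := Icc 0 t)) hmaps
    rw [hZ₂def]
    exact this
  -- the integrand
  set I : ℝ → ℝ := fun s =>
    (deriv Z₁ s) ^ 2 / (4 * Z₂ s) + (deriv Z₂ s) ^ 2 / 4 + m (Z₂ s) with hIdef
  set q1 : ℝ → ℝ := fun s => c ^ 2 / (4 * f s) with hq1def
  set q2 : ℝ → ℝ := fun s => (2 * Real.sqrt (m (f s))) * Real.sqrt (m (f s)) with hq2def
  have hfpos : ∀ s ∈ Icc (0:ℝ) T, 0 < f s := fun s hs => lt_of_lt_of_le hθ'pos (hfmem s hs).1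
  have hflb : ∀ s ∈ Icc (0:ℝ) T, θl ≤ f s := fun s hs => le_trans hθlθ'.le (hfmem s hs).1
  have hsqf : ContinuousOn (fun s => Real.sqrt (m (f s))) (Icc (0:ℝ) T) :=
    hsqm.comp_continuousOn hfcont
  have hq1cont : ContinuousOn q1 (Icc (0:ℝ) T) := by
    rw [hq1def]
    apply ContinuousOn.div continuousOn_const (continuousOn_const.mul hfcont)
    intro s hs
    have := hfpos s hs
    exact mul_ne_zero (by norm_num) this.ne'
  have hq2cont : ContinuousOn q2 (Icc (0:ℝ) T) := by
    rw [hq2def]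
    exact (continuousOn_const.mul hsqf).mul hsqf
  have hq1int : IntervalIntegrable q1 MeasureTheory.volume 0 T := by
    apply ContinuousOn.intervalIntegrable
    rwa [uIcc_of_le hT0]
  have hq2int : IntervalIntegrable q2 MeasureTheory.volume 0 T := by
    apply ContinuousOn.intervalIntegrable
    rwa [uIcc_of_le hT0]
  have hane : ∀ᵐ (z : ℝ) ∂MeasureTheory.volume, z ≠ T := by
    refine MeasureTheory.ae_iff.2 ?_
    have h : {z : ℝ | ¬ z ≠ T} = {T} := by ext z; simp
    rw [h]
    exact MeasureTheory.measure_singleton T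
  have hIJae : ∀ᵐ (z : ℝ) ∂MeasureTheory.volume, z ∈ Set.uIoc (0:ℝ) T → I z = q1 z + q2 z := by
    filter_upwards [hane] with z hzT hz
    rw [uIoc_of_le hT0] at hz
    have hzT' : z < T := lt_of_le_of_ne hz.2 hzT
    obtain ⟨hd, hval⟩ := hZ₂derivlt z hz.1 hzT'
    have hms : 0 ≤ m (f z) := hnonneg _ (hflb z ⟨hz.1.le, hz.2⟩)
    have hsq : Real.sqrt (m (f z)) ^ 2 = m (f z) := Real.sq_sqrt hms
    rw [hIdef, hq1def, hq2def]
    show (deriv Z₁ z) ^ 2 / (4 * Z₂ z) + (deriv Z₂ z) ^ 2 / 4 + m (Z₂ z)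
      = c ^ 2 / (4 * f z) + (2 * Real.sqrt (m (f z))) * Real.sqrt (m (f z))
    rw [hZ₁d, hd.deriv, hval]
    linear_combination -hsq
  have hIint1 : IntervalIntegrable I MeasureTheory.volume 0 T := by
    rw [intervalIntegrable_iff]
    have hJ : MeasureTheory.IntegrableOn (fun z => q1 z + q2 z) (Set.uIoc (0:ℝ) T)
        MeasureTheory.volume := by
      rw [← intervalIntegrable_iff]
      exact hq1int.add hq2int
    have h' : ∀ᵐ z ∂(MeasureTheory.volume.restrict (Set.uIoc (0:ℝ) T)), I z = q1 z + q2 z :=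
      (MeasureTheory.ae_restrict_iff' measurableSet_uIoc).2 hIJae
    exact hJ.congr (h'.mono fun z hz => hz.symm)
  have hint01 : ∫ s in (0:ℝ)..T, I s = (∫ s in (0:ℝ)..T, q1 s) + ∫ s in (0:ℝ)..T, q2 s := by
    rw [intervalIntegral.integral_congr_ae hIJae]
    exact intervalIntegral.integral_add hq1int hq2int
  have hq1b : ∫ s in (0:ℝ)..T, q1 s ≤ T * (c ^ 2 / (4 * θl)) := by
    have hb : IntervalIntegrable (fun _ : ℝ => c ^ 2 / (4 * θl))
        MeasureTheory.volume 0 T := intervalIntegrable_const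
    have h := intervalIntegral.integral_mono_on hT0 hq1int hb (fun z hz => by
      have h1 := hfpos z hz
      have h2 := hflb z hz
      rw [hq1def]
      show c ^ 2 / (4 * f z) ≤ c ^ 2 / (4 * θl)
      gcongr)
    rw [intervalIntegral.integral_const, smul_eq_mul, sub_zero] at h
    exact h
  have hq2eq : ∫ s in (0:ℝ)..T, q2 s = ∫ u in θ'..θ, Real.sqrt (m u) := by
    have hder : ∀ z ∈ uIcc (0:ℝ) T, HasDerivAt f (-(2 * Real.sqrt (m (f z)))) z := by
      rw [uIcc_of_le hT0]; exact hfderiv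
    have hcont' : ContinuousOn (fun z => -(2 * Real.sqrt (m (f z)))) (uIcc (0:ℝ) T) := by
      rw [uIcc_of_le hT0]
      exact (continuousOn_const.mul hsqf).neg
    have hsubst := intervalIntegral.integral_comp_smul_deriv hder hcont' hsqm
    have hf0 : f 0 = θ := by rw [hfdef]; show F (T - 0) = θ; rw [sub_zero]; exact hFT
    have hfT : f T = θ' := by rw [hfdef]; show F (T - T) = θ'; rw [sub_self]; exact hF0
    rw [hf0, hfT] at hsubst
    have hL : (∫ s in (0:ℝ)..T, (-(2 * Real.sqrt (m (f s)))) • ((fun u => Real.sqrt (m u)) ∘ f) s)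
        = ∫ s in (0:ℝ)..T, -q2 s := by
      apply intervalIntegral.integral_congr
      intro z _
      rw [hq2def]
      show (-(2 * Real.sqrt (m (f z)))) • Real.sqrt (m (f z))
        = -((2 * Real.sqrt (m (f z))) * Real.sqrt (m (f z)))
      rw [smul_eq_mul]; ring
    rw [hL, intervalIntegral.integral_neg] at hsubst
    have hsym := intervalIntegral.integral_symm (f := fun u => Real.sqrt (m u))
      (μ := MeasureTheory.volume) θ' θ
    linarith [hsubst, hsym]
  have hΦdiff : ∫ u in θ'..θ, Real.sqrt (m u) = Φ θ - Φ θ' := by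
    have h := intervalIntegral.integral_add_adjacent_intervals (hsqint θl θ') (hsqint θ' θ)
    rw [hΦ θ, hΦ θ']
    linarith
  have hΦθ'0 : 0 ≤ Φ θ' := by
    rw [hΦ]
    exact intervalIntegral.integral_nonneg hθlθ'.le fun u _ => Real.sqrt_nonneg _
  have hΦθη : Φ θ ≤ Φ (η t) := by
    have h := intervalIntegral.integral_add_adjacent_intervals (hsqint θl θ) (hsqint θ (η t))
    have h2 : 0 ≤ ∫ s in θ..η t, Real.sqrt (m s) :=
      intervalIntegral.integral_nonneg hθb fun u _ => Real.sqrt_nonneg _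
    rw [hΦ θ, hΦ (η t)]
    linarith
  -- the flat piece
  set C₁ : ℝ := c ^ 2 / (4 * θ') + m θ' with hC₁def
  have hIeq2 : ∀ z, z ∈ Set.uIoc T t → I z = C₁ := by
    intro z hz
    rw [uIoc_of_le hTt] at hz
    obtain ⟨hd, hval⟩ := hZ₂derivgt z hz.1
    rw [hIdef, hC₁def]
    show (deriv Z₁ z) ^ 2 / (4 * Z₂ z) + (deriv Z₂ z) ^ 2 / 4 + m (Z₂ z)
      = c ^ 2 / (4 * θ') + m θ'
    rw [hZ₁d, hd, hval]
    ring
  have hIint2 : IntervalIntegrable I MeasureTheory.volume T t := by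
    have hc : IntervalIntegrable (fun _ : ℝ => C₁) MeasureTheory.volume T t :=
      intervalIntegrable_const
    rw [intervalIntegrable_iff] at hc ⊢
    exact hc.congr_fun (fun z hz => (hIeq2 z hz).symm) measurableSet_uIoc
  have hint2 : ∫ s in T..t, I s = (t - T) * C₁ := by
    rw [intervalIntegral.integral_congr_ae
      (Filter.Eventually.of_forall (fun z hz => hIeq2 z hz))]
    rw [intervalIntegral.integral_const, smul_eq_mul]
  have htotal : ∫ s in (0:ℝ)..t, I s = (∫ s in (0:ℝ)..T, I s) + ∫ s in T..t, I s :=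
    (intervalIntegral.integral_add_adjacent_intervals hIint1 hIint2).symm
  -- final action bound
  have hmθ'b : m θ' ≤ m (θ₁ + 1) := hmm hθlθ'.le hθ'b.le
  have hmθ₁1 : 0 ≤ m (θ₁ + 1) := hnonneg _ (by simp only [mem_Ici]; linarith)
  have hc2 : t * (c ^ 2 / (4 * θl)) = (x' - x) ^ 2 / (4 * θl * t) := by
    rw [hcdef]
    field_simp
  have hAle : toadAction m t Z₁ Z₂ ≤ (x' - x) ^ 2 / (4 * θl * t) + Φ (η t) + m (θ₁ + 1) * t := by
    have hA : toadAction m t Z₁ Z₂ = ∫ s in (0:ℝ)..t, I s := rfl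
    have h2 : ∫ s in (0:ℝ)..T, q2 s = Φ θ - Φ θ' := by rw [hq2eq, hΦdiff]
    have hcnn : 0 ≤ c ^ 2 / (4 * θl) := by positivity
    have h4 : c ^ 2 / (4 * θ') ≤ c ^ 2 / (4 * θl) := by
      gcongr
    have h3 : (t - T) * C₁ ≤ (t - T) * (c ^ 2 / (4 * θl)) + m (θ₁ + 1) * t := by
      rw [hC₁def]
      have htT : (0:ℝ) ≤ t - T := by linarith
      have e1 := mul_le_mul_of_nonneg_left h4 htT
      have e2 := mul_le_mul_of_nonneg_left hmθ'b htT
      have e3 := mul_le_mul_of_nonneg_right (show t - T ≤ t by linarith) hmθ₁1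
      have hexp : (t - T) * (c ^ 2 / (4 * θ') + m θ')
          = (t - T) * (c ^ 2 / (4 * θ')) + (t - T) * (m θ') := by ring
      rw [hexp]
      calc (t - T) * (c ^ 2 / (4 * θ')) + (t - T) * m θ'
          ≤ (t - T) * (c ^ 2 / (4 * θl)) + (t - T) * m (θ₁ + 1) := by linarith
      _ ≤ (t - T) * (c ^ 2 / (4 * θl)) + m (θ₁ + 1) * t := by
          rw [mul_comm (m (θ₁ + 1)) t]; linarith
    rw [hA, htotal, hint01, hint2]
    have hΦb : Φ θ - Φ θ' ≤ Φ (η t) := by linarith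
    have hsum : T * (c ^ 2 / (4 * θl)) + (t - T) * (c ^ 2 / (4 * θl))
        = t * (c ^ 2 / (4 * θl)) := by ring
    linarith [hq1b, h2, hΦb, h3, hc2, hsum]
  constructor
  · -- toadZeta ≤ bound
    have hzeta : toadZeta θl m t x' θ' x θ ≤ toadAction m t Z₁ Z₂ := by
      unfold toadZeta
      apply csInf_le
      · refine ⟨0, fun A hA => ?_⟩
        obtain ⟨W₁, W₂, _, _, hWb, _, _, _, _, hAeq⟩ := hA
        rw [hAeq]
        apply intervalIntegral.integral_nonneg ht0.le
        intro u hu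
        have h1 := hWb u hu
        have h2 : 0 < W₂ u := lt_of_lt_of_le hθl h1
        have h3 : 0 ≤ m (W₂ u) := hnonneg _ h1
        positivity
      · exact ⟨Z₁, Z₂, hlipZ₁, hlipZ₂,
          fun s hs => le_trans hθlθ'.le (hZ₂mem s hs).1,
          hZ₁0, hZ₂0, hZ₁t, hZ₂t, rfl⟩
    exact hzeta.trans hAle
  · -- arithmetic bound
    have h6 : (x' - x) ^ 2 ≤ t ^ 2 := sq_le_sq' (by linarith) (by linarith)
    have h7 : (x' - x) ^ 2 / (4 * θl * t) ≤ t ^ 2 / (4 * θl * t) := by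
      gcongr
    have h8 : t ^ 2 / (4 * θl * t) = t / (4 * θl) := by
      field_simp
    have h9 : abar * t = m (θ₁ + 1) * t + (γinf + 1) * t := by rw [habar]; ring
    linarith [hηΦ]
end
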